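/- Fix w ∈ ℂ^{N_r} with ‖w‖ = 1, matrices A_1,…,A_I ∈ ℂ^{N_r×N_t} and nonzero scalars α_1^T,…,α_I^T ∈ ℂ (targets), matrices C_1,…,C_J ∈ ℂ^{N_r×N_t} and scalars α_1^C,…,α_J^C ∈ ℂ (clutter), σ_r > 0, N₀ > 0, P_max > 0, channels h_1,…,h_K ∈ ℂ^{N_t} and thresholds Γ_1,…,Γ_K ≥ 0. Define, for u = (u_1,…,u_K) ∈ (ℂ^{N_t})^K, SCNR_i(u) = (∑_k |α_i^T|²·|w^H A_i u_k|²) / (∑_j ∑_k |α_j^C|²·|w^H C_j u_k|² + σ_r), SINR_k(u) = |h_k^H u_k|² / (∑_{i≠k} |h_k^H u_i|² + N₀), and call u feasible if SINR_k(u) ≥ Γ_k for all k and ∑_k ‖u_k‖² ≤ P_max. If u* is feasible, min_i SCNR_i(u*) > 0, and u* maximizes min_i SCNR_i over all feasible u, then ∑_k ‖u_k*‖² = P_max. -/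

import Mathlib

/-! If the budget were slack, `∑ ‖u*ₖ‖² = S < Pmax`, scale `u*` by `c` with `‖c‖² = Pmax / S > 1`.
Every SINR `a / (b + N₀)` becomes `‖c‖² a / (‖c‖² b + N₀)`, which is no smaller, so the scaled
point is still feasible; every SCNR `a / (b + σr)` with `a > 0` becomes strictly larger in the
same way, so the minimum SCNR strictly increases, contradicting optimality. -/

open Matrix Finset

/-- The radar SCNR for target direction `i`, given receive beamformer `w`, target
steering matrices `A i` with gains `αT i`, clutter matrices `C j` with gains `αC j`,
noise power `σr`, evaluated at transmit beamformers `u = (u_1,…,u_K)`. -/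
noncomputable def SCNR {Nr Nt I J K : ℕ} (w : Fin Nr → ℂ)
    (A : Fin I → Matrix (Fin Nr) (Fin Nt) ℂ) (αT : Fin I → ℂ)
    (C : Fin J → Matrix (Fin Nr) (Fin Nt) ℂ) (αC : Fin J → ℂ) (σr : ℝ)
    (i : Fin I) (u : Fin K → Fin Nt → ℂ) : ℝ :=
  (∑ k, ‖αT i‖ ^ 2 * ‖star w ⬝ᵥ (A i).mulVec (u k)‖ ^ 2) /
    ((∑ j, ∑ k, ‖αC j‖ ^ 2 * ‖star w ⬝ᵥ (C j).mulVec (u k)‖ ^ 2) + σr)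

/-- The received SINR of communication user `k` with channel `h k` and noise power `N₀`,
evaluated at transmit beamformers `u`. -/
noncomputable def SINR {Nt K : ℕ} (h : Fin K → Fin Nt → ℂ) (N₀ : ℝ)
    (k : Fin K) (u : Fin K → Fin Nt → ℂ) : ℝ :=
  ‖star (h k) ⬝ᵥ u k‖ ^ 2 / ((∑ i ∈ Finset.univ.erase k, ‖star (h k) ⬝ᵥ u i‖ ^ 2) + N₀)

/-- `u` is feasible: all SINR constraints hold and the total power `∑ₖ ‖uₖ‖²` is within
the budget `Pmax`. -/
noncomputable def Feasible {Nt K : ℕ} (h : Fin K → Fin Nt → ℂ) (N₀ : ℝ) (Γ : Fin K → ℝ)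
    (Pmax : ℝ) (u : Fin K → Fin Nt → ℂ) : Prop :=
  (∀ k, SINR h N₀ k u ≥ Γ k) ∧ (∑ k, ∑ t, ‖u k t‖ ^ 2) ≤ Pmax

theorem div_add_le_mul_div_mul_add {𝕜 : Type*} [Field 𝕜] [LinearOrder 𝕜] [IsStrictOrderedRing 𝕜]
    {a b σ t : 𝕜} (ha : 0 ≤ a) (hb : 0 ≤ b) (hσ : 0 < σ) (ht : 1 ≤ t) :
    a / (b + σ) ≤ t * a / (t * b + σ) := by
  have ht0 : 0 < t := zero_lt_one.trans_le ht
  rw [div_le_div_iff₀ (by positivity) (by positivity)]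
  nlinarith [mul_nonneg (mul_nonneg ha hσ.le) (sub_nonneg.mpr ht)]

theorem div_add_lt_mul_div_mul_add {𝕜 : Type*} [Field 𝕜] [LinearOrder 𝕜] [IsStrictOrderedRing 𝕜]
    {a b σ t : 𝕜} (ha : 0 < a) (hb : 0 ≤ b) (hσ : 0 < σ) (ht : 1 < t) :
    a / (b + σ) < t * a / (t * b + σ) := by
  have ht0 : 0 < t := zero_lt_one.trans ht
  rw [div_lt_div_iff₀ (by positivity) (by positivity)]
  nlinarith [mul_pos (mul_pos ha hσ) (sub_pos.mpr ht)]

section Scaling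

variable {Nr Nt I J K : ℕ} {c : ℂ} (u : Fin K → Fin Nt → ℂ)

theorem sum_norm_sq_eq_zero_iff : ∑ k, ∑ t, ‖u k t‖ ^ 2 = 0 ↔ u = 0 := by
  simp (disch := intros; positivity) [Finset.sum_eq_zero_iff_of_nonneg, funext_iff]

theorem sum_norm_sq_smul :
    ∑ k, ∑ t, ‖(c • u) k t‖ ^ 2 = ‖c‖ ^ 2 * ∑ k, ∑ t, ‖u k t‖ ^ 2 := by
  simp only [Pi.smul_apply, norm_smul, mul_pow, Finset.mul_sum]

theorem SINR_smul (h : Fin K → Fin Nt → ℂ) (N₀ : ℝ) (k : Fin K) :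
    SINR h N₀ k (c • u) = ‖c‖ ^ 2 * ‖star (h k) ⬝ᵥ u k‖ ^ 2 /
      (‖c‖ ^ 2 * ∑ i ∈ univ.erase k, ‖star (h k) ⬝ᵥ u i‖ ^ 2 + N₀) := by
  simp only [SINR, Pi.smul_apply, dotProduct_smul, norm_smul, mul_pow, Finset.mul_sum]

theorem SCNR_zero (w : Fin Nr → ℂ) (A : Fin I → Matrix (Fin Nr) (Fin Nt) ℂ) (αT : Fin I → ℂ)
    (C : Fin J → Matrix (Fin Nr) (Fin Nt) ℂ) (αC : Fin J → ℂ) (σr : ℝ) (i : Fin I) :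
    SCNR w A αT C αC σr i (0 : Fin K → Fin Nt → ℂ) = 0 := by
  simp [SCNR]

theorem SCNR_smul (w : Fin Nr → ℂ) (A : Fin I → Matrix (Fin Nr) (Fin Nt) ℂ) (αT : Fin I → ℂ)
    (C : Fin J → Matrix (Fin Nr) (Fin Nt) ℂ) (αC : Fin J → ℂ) (σr : ℝ) (i : Fin I) :
    SCNR w A αT C αC σr i (c • u) =
      ‖c‖ ^ 2 * (∑ k, ‖αT i‖ ^ 2 * ‖star w ⬝ᵥ (A i) *ᵥ u k‖ ^ 2) /
        (‖c‖ ^ 2 * (∑ j, ∑ k, ‖αC j‖ ^ 2 * ‖star w ⬝ᵥ (C j) *ᵥ u k‖ ^ 2) + σr) := by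
  simp only [SCNR, Pi.smul_apply, mulVec_smul, dotProduct_smul, norm_smul, mul_pow,
    Finset.mul_sum, mul_left_comm (‖c‖ ^ 2)]

theorem SINR_le_SINR_smul (h : Fin K → Fin Nt → ℂ) {N₀ : ℝ} (hN₀ : 0 < N₀) (hc : 1 ≤ ‖c‖)
    (k : Fin K) : SINR h N₀ k u ≤ SINR h N₀ k (c • u) := by
  rw [SINR_smul]
  exact div_add_le_mul_div_mul_add (by positivity) (by positivity) hN₀ (one_le_pow₀ hc)

theorem SCNR_lt_SCNR_smul (w : Fin Nr → ℂ) (A : Fin I → Matrix (Fin Nr) (Fin Nt) ℂ)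
    (αT : Fin I → ℂ) (C : Fin J → Matrix (Fin Nr) (Fin Nt) ℂ) (αC : Fin J → ℂ) {σr : ℝ}
    (hσr : 0 < σr) (hc : 1 < ‖c‖) {i : Fin I} (hpos : 0 < SCNR w A αT C αC σr i u) :
    SCNR w A αT C αC σr i u < SCNR w A αT C αC σr i (c • u) := by
  rw [SCNR_smul]
  rw [SCNR, div_pos_iff_of_pos_right (by positivity)] at hpos
  exact div_add_lt_mul_div_mul_add hpos (by positivity) hσr (one_lt_pow₀ hc two_ne_zero)

end Scaling

theorem power_constraint_tight_general {Nr Nt I J K : ℕ} (hI : 0 < I)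
    (w : Fin Nr → ℂ)
    (A : Fin I → Matrix (Fin Nr) (Fin Nt) ℂ) (αT : Fin I → ℂ)
    (C : Fin J → Matrix (Fin Nr) (Fin Nt) ℂ) (αC : Fin J → ℂ)
    (σr N₀ Pmax : ℝ) (hσr : 0 < σr) (hN₀ : 0 < N₀)
    (h : Fin K → Fin Nt → ℂ) (Γ : Fin K → ℝ)
    (ustar : Fin K → Fin Nt → ℂ)
    (hfeas : Feasible h N₀ Γ Pmax ustar)
    (hpos : 0 < (Finset.univ.inf' (Finset.univ_nonempty_iff.mpr (Fin.pos_iff_nonempty.mp hI))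
      fun i => SCNR w A αT C αC σr i ustar))
    (hopt : ∀ u : Fin K → Fin Nt → ℂ, Feasible h N₀ Γ Pmax u →
      (Finset.univ.inf' (Finset.univ_nonempty_iff.mpr (Fin.pos_iff_nonempty.mp hI))
        fun i => SCNR w A αT C αC σr i u) ≤
      (Finset.univ.inf' (Finset.univ_nonempty_iff.mpr (Fin.pos_iff_nonempty.mp hI))
        fun i => SCNR w A αT C αC σr i ustar)) :
    (∑ k, ∑ t, ‖ustar k t‖ ^ 2) = Pmax := by
  obtain ⟨hsinr, hpow⟩ := hfeas
  set S := ∑ k, ∑ t, ‖ustar k t‖ ^ 2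
  by_contra hne
  have hSP : S < Pmax := hpow.lt_of_ne hne
  have hSCNR : ∀ i, 0 < SCNR w A αT C αC σr i ustar := fun i =>
    (Finset.lt_inf'_iff _).1 hpos i (mem_univ i)
  have hS : 0 < S := by
    refine (by positivity : 0 ≤ S).lt_of_ne fun hS0 => ?_
    have hSCNR0 := hSCNR ⟨0, hI⟩
    rw [(sum_norm_sq_eq_zero_iff ustar).1 hS0.symm, SCNR_zero] at hSCNR0
    exact hSCNR0.false
  set c : ℂ := ((√(Pmax / S) : ℝ) : ℂ)
  have hc : ‖c‖ = √(Pmax / S) := by simp [c]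
  have hc1 : 1 < ‖c‖ := by
    rw [hc, Real.lt_sqrt zero_le_one, one_pow, one_lt_div hS]
    exact hSP
  have hfeas' : Feasible h N₀ Γ Pmax (c • ustar) := by
    refine ⟨fun k => (hsinr k).trans (SINR_le_SINR_smul ustar h hN₀ hc1.le k), ?_⟩
    rw [sum_norm_sq_smul, hc, Real.sq_sqrt (div_pos (hS.trans hSP) hS).le, div_mul_cancel₀ _ hS.ne']
  refine (hopt _ hfeas').not_gt ((Finset.lt_inf'_iff _).2 fun i _ => ?_)
  exact (Finset.inf'_le _ (mem_univ i)).trans_lt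
    (SCNR_lt_SCNR_smul ustar w A αT C αC hσr hc1 (hSCNR i))

/-- Lemma 1 of the paper: any optimizer of the max–min SCNR problem (over feasible
transmit beamformers) with positive optimal value uses the full power budget. -/
theorem power_constraint_tight {Nr Nt I J K : ℕ} (hI : 0 < I)
    (w : Fin Nr → ℂ) (hw : Real.sqrt (∑ m, ‖w m‖ ^ 2) = 1)
    (A : Fin I → Matrix (Fin Nr) (Fin Nt) ℂ) (αT : Fin I → ℂ) (hαT : ∀ i, αT i ≠ 0)
    (C : Fin J → Matrix (Fin Nr) (Fin Nt) ℂ) (αC : Fin J → ℂ)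
    (σr N₀ Pmax : ℝ) (hσr : 0 < σr) (hN₀ : 0 < N₀) (hP : 0 < Pmax)
    (h : Fin K → Fin Nt → ℂ) (Γ : Fin K → ℝ) (hΓ : ∀ k, 0 ≤ Γ k)
    (ustar : Fin K → Fin Nt → ℂ)
    (hfeas : Feasible h N₀ Γ Pmax ustar)
    (hpos : 0 < (Finset.univ.inf' (Finset.univ_nonempty_iff.mpr (Fin.pos_iff_nonempty.mp hI))
      fun i => SCNR w A αT C αC σr i ustar))
    (hopt : ∀ u : Fin K → Fin Nt → ℂ, Feasible h N₀ Γ Pmax u →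
      (Finset.univ.inf' (Finset.univ_nonempty_iff.mpr (Fin.pos_iff_nonempty.mp hI))
        fun i => SCNR w A αT C αC σr i u) ≤
      (Finset.univ.inf' (Finset.univ_nonempty_iff.mpr (Fin.pos_iff_nonempty.mp hI))
        fun i => SCNR w A αT C αC σr i ustar)) :
    (∑ k, ∑ t, ‖ustar k t‖ ^ 2) = Pmax :=
  power_constraint_tight_general hI w A αT C αC σr N₀ Pmax hσr hN₀ h Γ ustar hfeas hpos hopt
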